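/- Let f ⊂ Ξ_Φ be regular with Φ = Φ'||Φ'' (n', n'' > 0, n'+n'' = n), and suppose moreover that for all u ∈ U, φ_0(u) = φ'_0(u) × φ''_0(u), and for all u ∈ U and μ ∈ φ_0(u): for every ρ' ∈ π'(μ',u) and ρ'' ∈ π''(μ'',u) there exists ρ̃ ∈ π(μ,u) with Φ^{ρ̃}(μ,u,t) = Φ^{ρ'×ρ''}(μ,u,t) for all t ∈ ℝ. Then f = f'||f'', where f', f'' are the regular systems generated by Φ', Φ'' with initial state functions φ'_0, φ''_0 and computation functions π', π''. -/

import Mathlib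

open scoped Classical

namespace AS

/-- A sequence `α : ℕ → 𝔹ⁿ` is progressive if every coordinate takes the value 1 infinitely often. -/
def ProgSeq {n : ℕ} (α : ℕ → Fin n → Bool) : Prop :=
  ∀ i : Fin n, {k : ℕ | α k i = true}.Infinite

/-- Identification of `𝔹^{n'} × 𝔹^{n''}` with `𝔹^{n'+n''}`. -/
def app {n' n'' : ℕ} (x : Fin n' → Bool) (y : Fin n'' → Bool) : Fin (n' + n'') → Bool :=
  Fin.addCases x y

/-- The first `n'` coordinates. -/
def fstPart {n' n'' : ℕ} (μ : Fin (n' + n'') → Bool) : Fin n' → Bool :=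
  fun i => μ (Fin.castAdd n'' i)

/-- The last `n''` coordinates. -/
def sndPart {n' n'' : ℕ} (μ : Fin (n' + n'') → Bool) : Fin n'' → Bool :=
  fun i => μ (Fin.natAdd n' i)

/-- Parallel connection of generator functions. -/
def par {n' n'' m : ℕ} (Φ' : (Fin n' → Bool) → (Fin m → Bool) → Fin n' → Bool)
    (Φ'' : (Fin n'' → Bool) → (Fin m → Bool) → Fin n'' → Bool) :
    (Fin (n' + n'') → Bool) → (Fin m → Bool) → Fin (n' + n'') → Bool :=
  fun μ lam => app (Φ' (fstPart μ) lam) (Φ'' (sndPart μ) lam)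

/-- `μ` with coordinate `j` complemented. -/
def negAt {n : ℕ} (μ : Fin n → Bool) (j : Fin n) : Fin n → Bool :=
  Function.update μ j (!(μ j))

/-- Boolean partial derivative of `Φ_i` with respect to `μ_j`. -/
def bderiv {n m : ℕ} (Φ : (Fin n → Bool) → (Fin m → Bool) → Fin n → Bool)
    (i j : Fin n) (μ : Fin n → Bool) (lam : Fin m → Bool) : Bool :=
  xor (Φ μ lam i) (Φ (negAt μ j) lam i)

/-- `Φ^ν`. -/
def nuAct {n m : ℕ} (Φ : (Fin n → Bool) → (Fin m → Bool) → Fin n → Bool)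
    (ν μ : Fin n → Bool) (lam : Fin m → Bool) : Fin n → Bool :=
  fun i => xor ((!(ν i)) && μ i) (ν i && Φ μ lam i)

/-- The iterates: `iter Φ α lam μ 0 = ω₋₁ = μ`, `iter Φ α lam μ (k+1) = ωₖ = Φ^{α k}(ω_{k-1}, lam k)`. -/
def iter {n m : ℕ} (Φ : (Fin n → Bool) → (Fin m → Bool) → Fin n → Bool)
    (α : ℕ → Fin n → Bool) (lam : ℕ → Fin m → Bool) (μ : Fin n → Bool) : ℕ → Fin n → Bool
  | 0 => μ
  | k + 1 => nuAct Φ (α k) (iter Φ α lam μ k) (lam k)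

/-- A strictly increasing sequence of reals, unbounded from above. -/
def IsSeq (t : ℕ → ℝ) : Prop :=
  StrictMono t ∧ ∀ T : ℝ, ∃ k, T < t k

/-- The function `ρ(s) = ⊕ₖ α(k)·χ_{{t_k}}(s)`. -/
noncomputable def progFun {n : ℕ} (α : ℕ → Fin n → Bool) (t : ℕ → ℝ) : ℝ → Fin n → Bool :=
  fun s i => decide (∃ k, s = t k ∧ α k i = true)

/-- A progressive function `ℝ → 𝔹ⁿ`. -/
def IsProgFun {n : ℕ} (ρ : ℝ → Fin n → Bool) : Prop :=
  ∃ α t, ProgSeq α ∧ IsSeq t ∧ ρ = progFun α t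

/-- The data of a progressive function: a progressive sequence of vectors on an
unbounded strictly increasing support sequence. -/
structure PF (n : ℕ) where
  α : ℕ → Fin n → Bool
  t : ℕ → ℝ
  mono : StrictMono t
  unbdd : ∀ T : ℝ, ∃ k, T < t k
  prog : ProgSeq α

/-- The underlying progressive function `ℝ → 𝔹ⁿ` of `ρ : PF n`. -/
noncomputable def PF.toFun {n : ℕ} (ρ : PF n) : ℝ → Fin n → Bool := progFun ρ.α ρ.t

/-- The signal `Φ^ρ(μ,u,·)`. -/
noncomputable def PF.run {n m : ℕ} (Φ : (Fin n → Bool) → (Fin m → Bool) → Fin n → Bool)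
    (ρ : PF n) (μ : Fin n → Bool) (u : ℝ → Fin m → Bool) : ℝ → Fin n → Bool :=
  fun s => iter Φ ρ.α (fun k => u (ρ.t k)) μ (Nat.find (ρ.unbdd s))

/-- The universal regular asynchronous system generated by `Φ`. -/
def Xi {n m : ℕ} (Φ : (Fin n → Bool) → (Fin m → Bool) → Fin n → Bool)
    (u : ℝ → Fin m → Bool) : Set (ℝ → Fin n → Bool) :=
  {x | ∃ (μ : Fin n → Bool) (ρ : PF n), x = PF.run Φ ρ μ u}

/-- `μ` is the initial value `x(-∞+0)` of `x`. -/
def InitVal {n : ℕ} (x : ℝ → Fin n → Bool) (μ : Fin n → Bool) : Prop :=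
  ∃ T : ℝ, ∀ s < T, x s = μ

/-- Projection of a progressive function onto the first `n'` coordinates. -/
def PF.fst {n' n'' : ℕ} (ρ : PF (n' + n'')) : PF n' :=
  ⟨fun k => fstPart (ρ.α k), ρ.t, ρ.mono, ρ.unbdd, fun i => ρ.prog (Fin.castAdd n'' i)⟩

/-- Projection of a progressive function onto the last `n''` coordinates. -/
def PF.snd {n' n'' : ℕ} (ρ : PF (n' + n'')) : PF n'' :=
  ⟨fun k => sndPart (ρ.α k), ρ.t, ρ.mono, ρ.unbdd, fun i => ρ.prog (Fin.natAdd n' i)⟩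

/-- `x` is a signal: eventually constant to the left, piecewise constant on `[t_k, t_{k+1})`. -/
def IsSignal {n : ℕ} (x : ℝ → Fin n → Bool) : Prop :=
  ∃ (μ : Fin n → Bool) (t : ℕ → ℝ), IsSeq t ∧ (∀ s, s < t 0 → x s = μ) ∧
    ∀ k, ∀ s, t k ≤ s → s < t (k + 1) → x s = x (t k)

end AS

/-- The projection `φ₀'` of the initial state function onto the first `n'` coordinates. -/
def phiFst {n' n'' m : ℕ} (φ0 : (ℝ → Fin m → Bool) → Set (Fin (n' + n'') → Bool))
    (u : ℝ → Fin m → Bool) : Set (Fin n' → Bool) :=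
  {ν | ∃ μ ∈ φ0 u, AS.fstPart μ = ν}

/-- The projection `φ₀''` of the initial state function onto the last `n''` coordinates. -/
def phiSnd {n' n'' m : ℕ} (φ0 : (ℝ → Fin m → Bool) → Set (Fin (n' + n'') → Bool))
    (u : ℝ → Fin m → Bool) : Set (Fin n'' → Bool) :=
  {ν | ∃ μ ∈ φ0 u, AS.sndPart μ = ν}

/-- The projection `π'` of the computation function onto the first `n'` coordinates. -/
def piFst {n' n'' m : ℕ} (φ0 : (ℝ → Fin m → Bool) → Set (Fin (n' + n'') → Bool))
    (π : (Fin (n' + n'') → Bool) → (ℝ → Fin m → Bool) → Set (AS.PF (n' + n'')))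
    (ν : Fin n' → Bool) (u : ℝ → Fin m → Bool) : Set (AS.PF n') :=
  {σ | ∃ μ ∈ φ0 u, AS.fstPart μ = ν ∧ ∃ ρ ∈ π μ u, σ = AS.PF.fst ρ}

/-- The projection `π''` of the computation function onto the last `n''` coordinates. -/
def piSnd {n' n'' m : ℕ} (φ0 : (ℝ → Fin m → Bool) → Set (Fin (n' + n'') → Bool))
    (π : (Fin (n' + n'') → Bool) → (ℝ → Fin m → Bool) → Set (AS.PF (n' + n'')))
    (ν : Fin n'' → Bool) (u : ℝ → Fin m → Bool) : Set (AS.PF n'') :=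
  {σ | ∃ μ ∈ φ0 u, AS.sndPart μ = ν ∧ ∃ ρ ∈ π μ u, σ = AS.PF.snd ρ}

/-- The system `f'` generated by `Φ'` from the projected data `φ₀'`, `π'`. -/
def fFst {n' n'' m : ℕ} (Φ' : (Fin n' → Bool) → (Fin m → Bool) → Fin n' → Bool)
    (φ0 : (ℝ → Fin m → Bool) → Set (Fin (n' + n'') → Bool))
    (π : (Fin (n' + n'') → Bool) → (ℝ → Fin m → Bool) → Set (AS.PF (n' + n'')))
    (u : ℝ → Fin m → Bool) : Set (ℝ → Fin n' → Bool) :=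
  {x | ∃ ν ∈ phiFst φ0 u, ∃ σ ∈ piFst φ0 π ν u, x = AS.PF.run Φ' σ ν u}

/-- The system `f''` generated by `Φ''` from the projected data `φ₀''`, `π''`. -/
def fSnd {n' n'' m : ℕ} (Φ'' : (Fin n'' → Bool) → (Fin m → Bool) → Fin n'' → Bool)
    (φ0 : (ℝ → Fin m → Bool) → Set (Fin (n' + n'') → Bool))
    (π : (Fin (n' + n'') → Bool) → (ℝ → Fin m → Bool) → Set (AS.PF (n' + n'')))
    (u : ℝ → Fin m → Bool) : Set (ℝ → Fin n'' → Bool) :=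
  {x | ∃ ν ∈ phiSnd φ0 u, ∃ σ ∈ piSnd φ0 π ν u, x = AS.PF.run Φ'' σ ν u}

/-! `Φ'||Φ''` acts coordinatewise in every step of the iteration, so each run of `Φ` splits into
runs of `Φ'` and `Φ''` along the projected progressive functions. Conversely, since `φ₀` is the
product of its projections and `π` approximates the product of its projections, any pair of runs
from `f'` and `f''` is reassembled into a run of `Φ` from `f`. -/

namespace AS

@[simp]
lemma fstPart_app {n' n'' : ℕ} (x : Fin n' → Bool) (y : Fin n'' → Bool) :
    fstPart (app x y) = x := by
  funext i; simp [fstPart, app]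

@[simp]
lemma sndPart_app {n' n'' : ℕ} (x : Fin n' → Bool) (y : Fin n'' → Bool) :
    sndPart (app x y) = y := by
  funext i; simp [sndPart, app]

@[simp]
lemma app_fstPart_sndPart {n' n'' : ℕ} (μ : Fin (n' + n'') → Bool) :
    app (fstPart μ) (sndPart μ) = μ := by
  funext i
  refine Fin.addCases (fun j => ?_) (fun j => ?_) i <;> simp [app, fstPart, sndPart]

section Parallel

variable {n' n'' m : ℕ} (Φ' : (Fin n' → Bool) → (Fin m → Bool) → Fin n' → Bool)
  (Φ'' : (Fin n'' → Bool) → (Fin m → Bool) → Fin n'' → Bool)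

lemma nuAct_par (ν μ : Fin (n' + n'') → Bool) (lam : Fin m → Bool) :
    nuAct (par Φ' Φ'') ν μ lam =
      app (nuAct Φ' (fstPart ν) (fstPart μ) lam) (nuAct Φ'' (sndPart ν) (sndPart μ) lam) := by
  funext i
  refine Fin.addCases (fun j => ?_) (fun j => ?_) i <;>
    simp [nuAct, par, app, fstPart, sndPart]

lemma iter_par (α : ℕ → Fin (n' + n'') → Bool) (lam : ℕ → Fin m → Bool)
    (μ : Fin (n' + n'') → Bool) (k : ℕ) :
    iter (par Φ' Φ'') α lam μ k =
      app (iter Φ' (fun k => fstPart (α k)) lam (fstPart μ) k)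
        (iter Φ'' (fun k => sndPart (α k)) lam (sndPart μ) k) := by
  induction k with
  | zero => simp [iter]
  | succ k ih => simp only [iter, ih, nuAct_par, fstPart_app, sndPart_app]

lemma PF.run_par (ρ : PF (n' + n'')) (μ : Fin (n' + n'') → Bool) (u : ℝ → Fin m → Bool) :
    ρ.run (par Φ' Φ'') μ u = fun s => app (ρ.fst.run Φ' (fstPart μ) u s)
      (ρ.snd.run Φ'' (sndPart μ) u s) :=
  funext fun _ => iter_par Φ' Φ'' ρ.α _ μ _

end Parallel

end AS

section Projections

variable {n' n'' m : ℕ} {φ0 : (ℝ → Fin m → Bool) → Set (Fin (n' + n'') → Bool)}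
  {π : (Fin (n' + n'') → Bool) → (ℝ → Fin m → Bool) → Set (AS.PF (n' + n''))}
  {u : ℝ → Fin m → Bool} {μ : Fin (n' + n'') → Bool} {ρ : AS.PF (n' + n'')}

lemma run_fst_mem_fFst (Φ' : (Fin n' → Bool) → (Fin m → Bool) → Fin n' → Bool)
    (hμ : μ ∈ φ0 u) (hρ : ρ ∈ π μ u) :
    ρ.fst.run Φ' (AS.fstPart μ) u ∈ fFst Φ' φ0 π u :=
  ⟨_, ⟨μ, hμ, rfl⟩, _, ⟨μ, hμ, rfl, ρ, hρ, rfl⟩, rfl⟩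

lemma run_snd_mem_fSnd (Φ'' : (Fin n'' → Bool) → (Fin m → Bool) → Fin n'' → Bool)
    (hμ : μ ∈ φ0 u) (hρ : ρ ∈ π μ u) :
    ρ.snd.run Φ'' (AS.sndPart μ) u ∈ fSnd Φ'' φ0 π u :=
  ⟨_, ⟨μ, hμ, rfl⟩, _, ⟨μ, hμ, rfl, ρ, hρ, rfl⟩, rfl⟩

end Projections

theorem f_eq_par_general {n' n'' m : ℕ}
    (Φ : (Fin (n' + n'') → Bool) → (Fin m → Bool) → Fin (n' + n'') → Bool)
    (Φ' : (Fin n' → Bool) → (Fin m → Bool) → Fin n' → Bool)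
    (Φ'' : (Fin n'' → Bool) → (Fin m → Bool) → Fin n'' → Bool)
    (hΦ : Φ = AS.par Φ' Φ'')
    (U : Set (ℝ → Fin m → Bool))
    (f : (ℝ → Fin m → Bool) → Set (ℝ → Fin (n' + n'') → Bool))
    (φ0 : (ℝ → Fin m → Bool) → Set (Fin (n' + n'') → Bool))
    (π : (Fin (n' + n'') → Bool) → (ℝ → Fin m → Bool) → Set (AS.PF (n' + n'')))
    (hf : ∀ u ∈ U, f u = {x | ∃ μ ∈ φ0 u, ∃ ρ ∈ π μ u, x = AS.PF.run Φ ρ μ u})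
    (hφ0 : ∀ u ∈ U, φ0 u =
      {μ | AS.fstPart μ ∈ phiFst φ0 u ∧ AS.sndPart μ ∈ phiSnd φ0 u})
    (happrox : ∀ u ∈ U, ∀ μ ∈ φ0 u, ∀ σ' ∈ piFst φ0 π (AS.fstPart μ) u,
      ∀ σ'' ∈ piSnd φ0 π (AS.sndPart μ) u, ∃ ρ ∈ π μ u, ∀ s : ℝ,
        AS.PF.run Φ ρ μ u s =
          AS.app (AS.PF.run Φ' σ' (AS.fstPart μ) u s) (AS.PF.run Φ'' σ'' (AS.sndPart μ) u s)) :
    ∀ u ∈ U, f u = {z | ∃ x' ∈ fFst Φ' φ0 π u, ∃ x'' ∈ fSnd Φ'' φ0 π u,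
      z = fun s => AS.app (x' s) (x'' s)} := by
  intro u hu
  rw [hf u hu]
  ext x
  constructor
  · rintro ⟨μ, hμ, ρ, hρ, rfl⟩
    exact ⟨_, run_fst_mem_fFst Φ' hμ hρ, _, run_snd_mem_fSnd Φ'' hμ hρ, hΦ ▸ ρ.run_par Φ' Φ'' μ u⟩
  · rintro ⟨x', ⟨ν', hν', σ', hσ', rfl⟩, x'', ⟨ν'', hν'', σ'', hσ'', rfl⟩, rfl⟩
    have hμ : AS.app ν' ν'' ∈ φ0 u := by
      rw [hφ0 u hu]
      simpa using ⟨hν', hν''⟩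
    obtain ⟨ρ, hρ, hrun⟩ := happrox u hu _ hμ σ' (by simpa using hσ') σ'' (by simpa using hσ'')
    refine ⟨_, hμ, ρ, hρ, funext fun s => ?_⟩
    simpa using (hrun s).symm

/-- if `f ⊂ Ξ_Φ` with `Φ = Φ'||Φ''`, `φ₀(u) = φ₀'(u) × φ₀''(u)` and
`π(μ,u) ≈ π'(μ',u) × π''(μ'',u)`, then `f = f'||f''`. -/
theorem f_eq_par {n' n'' m : ℕ}
    (Φ : (Fin (n' + n'') → Bool) → (Fin m → Bool) → Fin (n' + n'') → Bool)
    (Φ' : (Fin n' → Bool) → (Fin m → Bool) → Fin n' → Bool)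
    (Φ'' : (Fin n'' → Bool) → (Fin m → Bool) → Fin n'' → Bool)
    (hΦ : Φ = AS.par Φ' Φ'') (hn' : 0 < n') (hn'' : 0 < n'')
    (U : Set (ℝ → Fin m → Bool))
    (f : (ℝ → Fin m → Bool) → Set (ℝ → Fin (n' + n'') → Bool))
    (φ0 : (ℝ → Fin m → Bool) → Set (Fin (n' + n'') → Bool))
    (π : (Fin (n' + n'') → Bool) → (ℝ → Fin m → Bool) → Set (AS.PF (n' + n'')))
    (hf : ∀ u ∈ U, f u = {x | ∃ μ ∈ φ0 u, ∃ ρ ∈ π μ u, x = AS.PF.run Φ ρ μ u})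
    (hφ0 : ∀ u ∈ U, φ0 u =
      {μ | AS.fstPart μ ∈ phiFst φ0 u ∧ AS.sndPart μ ∈ phiSnd φ0 u})
    (happrox : ∀ u ∈ U, ∀ μ ∈ φ0 u, ∀ σ' ∈ piFst φ0 π (AS.fstPart μ) u,
      ∀ σ'' ∈ piSnd φ0 π (AS.sndPart μ) u, ∃ ρ ∈ π μ u, ∀ s : ℝ,
        AS.PF.run Φ ρ μ u s =
          AS.app (AS.PF.run Φ' σ' (AS.fstPart μ) u s) (AS.PF.run Φ'' σ'' (AS.sndPart μ) u s)) :
    ∀ u ∈ U, f u = {z | ∃ x' ∈ fFst Φ' φ0 π u, ∃ x'' ∈ fSnd Φ'' φ0 π u,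
      z = fun s => AS.app (x' s) (x'' s)} :=
  f_eq_par_general Φ Φ' Φ'' hΦ U f φ0 π hf hφ0 happrox
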